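/- For all α, β, γ > 0, b₀(γ,β,α)·θ_log(γ,β) + b₀(α,β,γ)·θ_log(α,β) ≥ β²/2, where b₀(α,β,γ) := ∂₁θ_log(β,γ)·α + ∂₂θ_log(β,γ)·β and θ_log is the logarithmic mean. -/

import Mathlib

open Real

noncomputable def thetaLog (r s : ℝ) : ℝ := ∫ p in (0:ℝ)..1, r ^ (1 - p) * s ^ p

noncomputable def dtheta1 (r s : ℝ) : ℝ := deriv (fun u : ℝ => thetaLog u s) r

noncomputable def dtheta2 (r s : ℝ) : ℝ := deriv (fun v : ℝ => thetaLog r v) s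

noncomputable def bfun (a b c : ℝ) : ℝ := dtheta1 b c * a + dtheta2 b c * b - thetaLog a b

noncomputable def b0fun (a b c : ℝ) : ℝ := dtheta1 b c * a + dtheta2 b c * b

/-!
By symmetry of `θ`, `∂₁θ(r, s) = ∂₂θ(s, r)`, and differentiating under the integral sign gives
`∂₂θ(b, x) = ∫₀¹ p b^(1-p) x^(p-1) dp`. The integrands of `∂₂θ(b, x)` and `θ(x, b)` multiply to
`p b`, so Cauchy–Schwarz yields `∂₂θ(b, x) θ(x, b) ≥ (∫₀¹ √(p b) dp)² = 4b/9`.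
Dropping the (nonnegative) terms carrying `α` and `γ`, the left-hand side is at least
`β (X + Y)` with `X = ∂₂θ(β, α) θ(γ, β)`, `Y = ∂₂θ(β, γ) θ(α, β)`; since `X Y` is the product of
two such Cauchy–Schwarz quantities, AM–GM gives `X + Y ≥ 8β/9`, hence the bound `8β²/9 ≥ β²/2`.
-/

open MeasureTheory Set

theorem sq_integral_sqrt_mul_le {α : Type*} [MeasurableSpace α] {μ : Measure α} {f g : α → ℝ}
    (hf : 0 ≤ᵐ[μ] f) (hg : 0 ≤ᵐ[μ] g) (hfi : Integrable f μ) (hgi : Integrable g μ) :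
    (∫ x, √(f x * g x) ∂μ) ^ 2 ≤ (∫ x, f x ∂μ) * ∫ x, g x ∂μ := by
  have hfgi : Integrable (fun x => √(f x * g x)) μ := by
    refine (hfi.add hgi).mono' (continuous_sqrt.comp_aestronglyMeasurable
      (hfi.1.mul hgi.1)) ?_
    filter_upwards [hf, hg] with x (hfx : 0 ≤ f x) (hgx : 0 ≤ g x)
    rw [norm_of_nonneg (sqrt_nonneg _), Pi.add_apply]
    nlinarith [sq_sqrt (mul_nonneg hfx hgx), sqrt_nonneg (f x * g x)]
  -- `t ↦ ∫ (t √f - √g)²` is a nonnegative quadratic, so its discriminant is nonpositive.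
  have hquad : ∀ t : ℝ, 0 ≤ (∫ x, f x ∂μ) * (t * t) + (-2 * ∫ x, √(f x * g x) ∂μ) * t
      + ∫ x, g x ∂μ := by
    intro t
    have hsq : 0 ≤ᵐ[μ] fun x => t ^ 2 * f x - 2 * t * √(f x * g x) + g x := by
      filter_upwards [hf, hg] with x (hfx : 0 ≤ f x) (hgx : 0 ≤ g x)
      rw [Pi.zero_apply, sqrt_mul hfx]
      nlinarith [sq_nonneg (t * √(f x) - √(g x)), sq_sqrt hfx, sq_sqrt hgx]
    have := integral_nonneg_of_ae hsq
    rw [integral_add ?_ hgi, integral_sub ?_ ?_, integral_const_mul,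
      integral_const_mul] at this
    · linarith
    · exact hfi.const_mul _
    · exact hfgi.const_mul _
    · exact (hfi.const_mul _).sub (hfgi.const_mul _)
  have := discrim_le_zero hquad
  rw [discrim] at this
  linarith

theorem hasDerivAt_integral_mul_rpow {g : ℝ → ℝ} (hg : Continuous g) {s : ℝ} (hs : 0 < s) :
    HasDerivAt (fun v => ∫ p in (0:ℝ)..1, g p * v ^ p)
      (∫ p in (0:ℝ)..1, p * g p * s ^ (p - 1)) s := by
  have hs2 : 0 < s / 2 := half_pos hs
  have hball : ∀ v ∈ Metric.ball s (s / 2), s / 2 < v := fun v hv => by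
    rw [Metric.mem_ball, dist_eq, abs_lt] at hv
    linarith
  refine (intervalIntegral.hasDerivAt_integral_of_dominated_loc_of_deriv_le
    (F' := fun v p => p * g p * v ^ (p - 1)) (bound := fun p => |g p| * (s / 2) ^ (p - 1))
    (Metric.ball_mem_nhds s hs2) ?_ ?_ ?_ ?_ ?_ ?_).2
  · filter_upwards [eventually_gt_nhds hs] with v hv
    exact (hg.mul (continuous_const.rpow continuous_id fun _ => Or.inl hv.ne')).aestronglyMeasurable
  · exact (hg.mul (continuous_const.rpow continuous_id fun _ => Or.inl hs.ne')).intervalIntegrable _ _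
  · exact ((continuous_id.mul hg).mul (continuous_const.rpow (continuous_id.sub continuous_const)
      fun _ => Or.inl hs.ne')).aestronglyMeasurable
  · refine Filter.Eventually.of_forall fun p hp v hv => ?_
    rw [uIoc_of_le zero_le_one] at hp
    have hv0 : 0 < v := hs2.trans (hball v hv)
    have hpow : p * v ^ (p - 1) ≤ (s / 2) ^ (p - 1) := calc
      p * v ^ (p - 1) ≤ 1 * v ^ (p - 1) := by gcongr; exact hp.2
      _ ≤ (s / 2) ^ (p - 1) := by
        rw [one_mul]
        exact rpow_le_rpow_of_nonpos hs2 (hball v hv).le (by linarith [hp.2])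
    calc ‖p * g p * v ^ (p - 1)‖ = |g p| * (p * v ^ (p - 1)) := by
          rw [norm_eq_abs, abs_mul, abs_mul, abs_of_pos hp.1, abs_of_pos (rpow_pos_of_pos hv0 _)]
          ring
      _ ≤ |g p| * (s / 2) ^ (p - 1) := mul_le_mul_of_nonneg_left hpow (abs_nonneg _)
  · exact (hg.abs.mul (continuous_const.rpow (continuous_id.sub continuous_const)
      fun _ => Or.inl hs2.ne')).intervalIntegrable _ _
  · refine Filter.Eventually.of_forall fun p _ v hv => ?_
    have hv0 : 0 < v := hs2.trans (hball v hv)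
    exact ((hasDerivAt_rpow_const (Or.inl hv0.ne')).const_mul (g p)).congr_deriv (by ring)

section LogarithmicMean

variable {r s : ℝ}

theorem thetaLog_comm (r s : ℝ) : thetaLog r s = thetaLog s r := by
  have h := intervalIntegral.integral_comp_sub_left (a := 0) (b := 1)
    (fun p : ℝ => s ^ (1 - p) * r ^ p) 1
  norm_num at h
  rw [thetaLog, thetaLog, ← h]
  exact intervalIntegral.integral_congr fun p _ => mul_comm _ _

theorem thetaLog_nonneg (hr : 0 ≤ r) (hs : 0 ≤ s) : 0 ≤ thetaLog r s :=
  intervalIntegral.integral_nonneg zero_le_one fun p _ => by positivity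

theorem hasDerivAt_thetaLog_right (hr : 0 < r) (hs : 0 < s) :
    HasDerivAt (thetaLog r) (∫ p in (0:ℝ)..1, p * r ^ (1 - p) * s ^ (p - 1)) s :=
  hasDerivAt_integral_mul_rpow (by fun_prop (disch := positivity)) hs

theorem dtheta2_eq_integral (hr : 0 < r) (hs : 0 < s) :
    dtheta2 r s = ∫ p in (0:ℝ)..1, p * r ^ (1 - p) * s ^ (p - 1) :=
  (hasDerivAt_thetaLog_right hr hs).deriv

theorem dtheta1_eq_dtheta2 (r s : ℝ) : dtheta1 r s = dtheta2 s r := by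
  simp only [dtheta1, dtheta2, thetaLog_comm _ s]

theorem dtheta2_nonneg (hr : 0 < r) (hs : 0 < s) : 0 ≤ dtheta2 r s := by
  rw [dtheta2_eq_integral hr hs]
  exact intervalIntegral.integral_nonneg zero_le_one fun p hp => by have := hp.1; positivity

theorem integral_sqrt_zero_one : ∫ p in (0:ℝ)..1, √p = 2 / 3 := by
  simp_rw [sqrt_eq_rpow]
  rw [integral_rpow (Or.inl (by norm_num))]
  norm_num

theorem four_ninths_mul_le_dtheta2_mul_thetaLog (hr : 0 < r) (hs : 0 < s) :
    4 / 9 * r ≤ dtheta2 r s * thetaLog s r := by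
  set f := fun p : ℝ => p * r ^ (1 - p) * s ^ (p - 1)
  set g := fun p : ℝ => s ^ (1 - p) * r ^ p
  have hfg : ∀ p, f p * g p = p * r := fun p => by
    simp only [f, g]
    calc p * r ^ (1 - p) * s ^ (p - 1) * (s ^ (1 - p) * r ^ p)
        = p * (r ^ (1 - p) * r ^ p) * (s ^ (p - 1) * s ^ (1 - p)) := by ring
      _ = p * r := by rw [← rpow_add hr, ← rpow_add hs]; norm_num
  have hsqrt : ∫ p in (0:ℝ)..1, √(f p * g p) = 2 / 3 * √r := by
    simp_rw [hfg, sqrt_mul' _ hr.le]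
    rw [intervalIntegral.integral_mul_const, integral_sqrt_zero_one]
  have hcs := sq_integral_sqrt_mul_le (μ := volume.restrict (Ioc 0 1)) (f := f) (g := g)
    ((ae_restrict_iff' measurableSet_Ioc).2 (Filter.Eventually.of_forall fun p hp => by
      have := hp.1; positivity))
    (Filter.Eventually.of_forall fun p => by positivity)
    (Continuous.integrableOn_Ioc (by fun_prop (disch := positivity)))
    (Continuous.integrableOn_Ioc (by fun_prop (disch := positivity)))
  simp only [← intervalIntegral.integral_of_le zero_le_one, hsqrt] at hcs
  rw [dtheta2_eq_integral hr hs, thetaLog]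
  nlinarith [sq_sqrt hr.le]

end LogarithmicMean

theorem b0_theta_lower_half (a b c : ℝ) (ha : 0 < a) (hb : 0 < b) (hc : 0 < c) :
    b0fun c b a * thetaLog c b + b0fun a b c * thetaLog a b ≥ b ^ 2 / 2 := by
  rw [b0fun, b0fun, dtheta1_eq_dtheta2, dtheta1_eq_dtheta2]
  have hθa := thetaLog_nonneg ha.le hb.le
  have hθc := thetaLog_nonneg hc.le hb.le
  have hA := four_ninths_mul_le_dtheta2_mul_thetaLog hb ha
  have hC := four_ninths_mul_le_dtheta2_mul_thetaLog hb hc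
  set X := dtheta2 b a * thetaLog c b
  set Y := dtheta2 b c * thetaLog a b
  have hX : 0 ≤ X := mul_nonneg (dtheta2_nonneg hb ha) hθc
  have hY : 0 ≤ Y := mul_nonneg (dtheta2_nonneg hb hc) hθa
  have hXY : (4 / 9 * b) * (4 / 9 * b) ≤ X * Y := calc
    _ ≤ (dtheta2 b a * thetaLog a b) * (dtheta2 b c * thetaLog c b) :=
      mul_le_mul hA hC (by positivity) (hA.trans' (by positivity))
    _ = X * Y := by ring
  have hsum : 8 / 9 * b ≤ X + Y := by nlinarith [sq_nonneg (X - Y)]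
  have hdrop : 0 ≤ dtheta2 a b * c * thetaLog c b + dtheta2 c b * a * thetaLog a b := by
    have := dtheta2_nonneg ha hb
    have := dtheta2_nonneg hc hb
    positivity
  nlinarith
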